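/- arXiv:2001.03018 — 6 statements merged into one kernel-verified Lean document; each statement's English description precedes it below -/
import Mathlib

section
/- The direct sum of two discrete midpoint convex sets need not be discrete midpoint convex: for S₁ = {(1,0),(0,1)} ⊆ ℤ² and S₂ = ℤ, the set S₁ ⊕ S₂ = {(1,0,t),(0,1,t) : t ∈ ℤ} is not discrete midpoint convex. -/
/-- A nonempty set `S ⊆ ℤⁿ` is discrete midpoint convex if for all `x, y ∈ S` with
`‖x − y‖_∞ ≥ 2` (i.e. some component differs by at least 2), both the componentwise
rounded-up and rounded-down midpoints belong to `S`. -/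
def DiscreteMidpointConvex {n : ℕ} (S : Set (Fin n → ℤ)) : Prop :=
  S.Nonempty ∧ ∀ x ∈ S, ∀ y ∈ S, (∃ i, 2 ≤ |x i - y i|) →
    (fun i => ⌈((x i + y i : ℤ) : ℚ) / 2⌉) ∈ S ∧ (fun i => ⌊((x i + y i : ℤ) : ℚ) / 2⌋) ∈ S

theorem DiscreteMidpointConvex.of_forall_abs_sub_le_one {n : ℕ} {S : Set (Fin n → ℤ)}
    (hne : S.Nonempty) (h : ∀ x ∈ S, ∀ y ∈ S, ∀ i, |x i - y i| ≤ 1) :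
    DiscreteMidpointConvex S :=
  ⟨hne, fun x hx y hy ⟨i, hi⟩ => absurd (h x hx y hy i) (by omega)⟩

theorem discreteMidpointConvex_univ (n : ℕ) :
    DiscreteMidpointConvex (Set.univ : Set (Fin n → ℤ)) :=
  ⟨Set.univ_nonempty, fun _ _ _ _ _ => ⟨trivial, trivial⟩⟩

theorem Int.ceil_intCast_div_two_of_eq_one {m : ℤ} (h : m = 1) : ⌈(m : ℚ) / 2⌉ = 1 := by
  subst h; norm_num

/-- The direct sum `S₁ ⊕ S₂ = {(1,0,t),(0,1,t) : t ∈ ℤ}` of the discrete midpoint convex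
sets `S₁ = {(1,0),(0,1)}` and `S₂ = ℤ` is not discrete midpoint convex. -/
theorem directSum_not_dmc :
    DiscreteMidpointConvex ({![1,0], ![0,1]} : Set (Fin 2 → ℤ)) ∧
    DiscreteMidpointConvex (Set.univ : Set (Fin 1 → ℤ)) ∧
    ¬ DiscreteMidpointConvex
        {z : Fin 3 → ℤ | (z 0 = 1 ∧ z 1 = 0) ∨ (z 0 = 0 ∧ z 1 = 1)} := by
  refine ⟨.of_forall_abs_sub_le_one ⟨![1,0], .inl rfl⟩ ?_, discreteMidpointConvex_univ 1, ?_⟩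
  · rintro x (rfl | rfl) y (rfl | rfl) i <;> fin_cases i <;> simp
  · rintro ⟨-, h⟩
    -- The first two coordinates of both points sum to 1, so the rounded-up midpoint starts with (1, 1).
    obtain ⟨hmid, -⟩ := h ![1, 0, 0] (.inl ⟨rfl, rfl⟩) ![0, 1, 2] (.inr ⟨rfl, rfl⟩) ⟨2, by decide⟩
    have h0 := Int.ceil_intCast_div_two_of_eq_one (m := ![1, 0, 0] 0 + ![0, 1, 2] 0) rfl
    have h1 := Int.ceil_intCast_div_two_of_eq_one (m := ![1, 0, 0] 1 + ![0, 1, 2] 1) rfl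
    rcases hmid with ⟨-, h1'⟩ | ⟨h0', -⟩
    · exact one_ne_zero (h1.symm.trans h1')
    · exact one_ne_zero (h0.symm.trans h0')
end

section
/- The set S = {(0,0,0,0,0,0),(0,0,0,0,1,1),(1,1,0,0,0,0),(1,1,0,0,1,1)} ⊆ ℤ⁶ is L♮-convex, while its aggregation T = {(0,0,0),(0,1,1),(1,1,0),(1,2,1)} by the partition N₁={1,4}, N₂={2,5}, N₃={3,6} is not L♮-convex. -/
/-!
L♮-convexity of `S` is a finite check once the rounded midpoints are written with integer
division. Every vector of `T` satisfies `y₂ = y₁ + y₃`, whereas the rounded-up midpoint of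
`(0,1,1), (1,1,0) ∈ T` is `(1,1,1)`.
-/

/-- A nonempty set `S ⊆ ℤⁿ` is L♮-convex if it is closed under taking componentwise
rounded-up and rounded-down midpoints. -/
def LnatConvex {n : ℕ} (S : Set (Fin n → ℤ)) : Prop :=
  S.Nonempty ∧ ∀ x ∈ S, ∀ y ∈ S,
    (fun i => ⌈((x i + y i : ℤ) : ℚ) / 2⌉) ∈ S ∧ (fun i => ⌊((x i + y i : ℤ) : ℚ) / 2⌋) ∈ S

theorem Rat.ceil_intCast_div_two (a : ℤ) : ⌈(a : ℚ) / 2⌉ = (a + 1) / 2 := by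
  have := Rat.ceil_intCast_div_natCast a 2
  push_cast at this
  omega

theorem Rat.floor_intCast_div_two (a : ℤ) : ⌊(a : ℚ) / 2⌋ = a / 2 := by
  exact_mod_cast Rat.floor_intCast_div_natCast a 2

theorem lnatConvex_iff {n : ℕ} (S : Set (Fin n → ℤ)) :
    LnatConvex S ↔ S.Nonempty ∧ ∀ x ∈ S, ∀ y ∈ S,
      (fun i => (x i + y i + 1) / 2) ∈ S ∧ (fun i => (x i + y i) / 2) ∈ S := by
  simp only [LnatConvex, Rat.ceil_intCast_div_two, Rat.floor_intCast_div_two]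

/-- The set `S ⊆ ℤ⁶` is L♮-convex, but its aggregation by the partition
`N₁ = {1,4}, N₂ = {2,5}, N₃ = {3,6}` (0-indexed: `{0,3},{1,4},{2,5}`) is not. -/
theorem aggregation_not_lnatConvex :
    let S : Set (Fin 6 → ℤ) :=
      {![0,0,0,0,0,0], ![0,0,0,0,1,1], ![1,1,0,0,0,0], ![1,1,0,0,1,1]}
    let T : Set (Fin 3 → ℤ) :=
      {y | ∃ x ∈ S, ∀ j : Fin 3, y j = x (Fin.castAdd 3 j) + x (Fin.natAdd 3 j)}
    LnatConvex S ∧ ¬ LnatConvex T := by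
  intro S T
  have hS : S = ↑({![0,0,0,0,0,0], ![0,0,0,0,1,1], ![1,1,0,0,0,0], ![1,1,0,0,1,1]} :
      Finset (Fin 6 → ℤ)) := by
    simp [S]
  have hT : ∀ y ∈ T, y 1 = y 0 + y 2 := by
    rintro y ⟨x, hx, hy⟩
    simp only [S, Set.mem_insert_iff, Set.mem_singleton_iff] at hx
    rw [hy 0, hy 1, hy 2]
    rcases hx with rfl | rfl | rfl | rfl <;> rfl
  refine ⟨?_, fun hconv => ?_⟩
  · rw [lnatConvex_iff, hS]
    simp only [Finset.mem_coe, Finset.coe_nonempty]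
    decide
  · have h011 : ![0, 1, 1] ∈ T := ⟨![0,0,0,0,1,1], by simp [S], by decide⟩
    have h110 : ![1, 1, 0] ∈ T := ⟨![1,1,0,0,0,0], by simp [S], by decide⟩
    have := hT _ (((lnatConvex_iff T).1 hconv).2 _ h011 _ h110).1
    simp at this
end

section
/- The direct sum of two multimodular functions is multimodular: if f₁: ℤ^{n₁} → ℝ ∪ {+∞} and f₂: ℤ^{n₂} → ℝ ∪ {+∞} are multimodular, then (f₁ ⊕ f₂)(x,y) = f₁(x) + f₂(y) is a multimodular function on ℤ^{n₁+n₂} (with the components of (x,y) ordered naturally). -/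
/-- The direction `dir k` (`k = 0,…,n`) in the multimodularity set
`F = {−e₁, e₁−e₂, …, e_{n−1}−e_n, e_n}`. -/
def mmDir (n : ℕ) (k : Fin (n + 1)) : Fin n → ℤ := fun i =>
  if (i : ℕ) + 1 = (k : ℕ) then 1 else if (i : ℕ) = (k : ℕ) then -1 else 0

/-- A function `f : ℤⁿ → ℝ ∪ {+∞}` with nonempty effective domain is multimodular if
`f(z+d) + f(z+d′) ≥ f(z) + f(z+d+d′)` for all `z` and distinct `d, d′ ∈ F`. -/
def Multimodular {n : ℕ} (f : (Fin n → ℤ) → WithTop ℝ) : Prop :=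
  (∃ x, f x ≠ ⊤) ∧
  ∀ z : Fin n → ℤ, ∀ k l : Fin (n + 1), k ≠ l →
    f z + f (z + mmDir n k + mmDir n l) ≤ f (z + mmDir n k) + f (z + mmDir n l)

lemma mm_blockIneq {n : ℕ} (f : (Fin n → ℤ) → WithTop ℝ)
    (hf : ∀ z : Fin n → ℤ, ∀ k l : Fin (n + 1), k ≠ l →
      f z + f (z + mmDir n k + mmDir n l) ≤ f (z + mmDir n k) + f (z + mmDir n l))
    (z a b : Fin n → ℤ)
    (h : a = 0 ∨ b = 0 ∨ ∃ k l : Fin (n + 1), k ≠ l ∧ a = mmDir n k ∧ b = mmDir n l) :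
    f z + f (z + a + b) ≤ f (z + a) + f (z + b) := by
  rcases h with rfl | rfl | ⟨k, l, hkl, rfl, rfl⟩
  · simp [add_comm]
  · simp [add_comm]
  · exact hf z k l hkl

lemma mm_res1_eq {n₁ n₂ : ℕ} (k : Fin (n₁ + n₂ + 1)) (hk : (k : ℕ) ≤ n₁) :
    (fun i : Fin n₁ => mmDir (n₁ + n₂) k (Fin.castAdd n₂ i))
      = mmDir n₁ ⟨(k : ℕ), Nat.lt_succ_of_le hk⟩ := by
  funext i
  simp [mmDir]

lemma mm_res1_zero {n₁ n₂ : ℕ} (k : Fin (n₁ + n₂ + 1)) (hk : n₁ < (k : ℕ)) :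
    (fun i : Fin n₁ => mmDir (n₁ + n₂) k (Fin.castAdd n₂ i)) = 0 := by
  funext i
  have hi := i.isLt
  simp only [mmDir, Fin.coe_castAdd, Pi.zero_apply]
  rw [if_neg (by omega), if_neg (by omega)]

lemma mm_res2_eq {n₁ n₂ : ℕ} (k : Fin (n₁ + n₂ + 1)) (hk : n₁ ≤ (k : ℕ)) :
    (fun j : Fin n₂ => mmDir (n₁ + n₂) k (Fin.natAdd n₁ j))
      = mmDir n₂ ⟨(k : ℕ) - n₁, by have := k.isLt; omega⟩ := by
  funext j
  have hk2 := k.isLt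
  simp only [mmDir, Fin.coe_natAdd]
  have e1 : (n₁ + (j : ℕ) + 1 = (k : ℕ)) ↔ ((j : ℕ) + 1 = (k : ℕ) - n₁) := by omega
  have e2 : (n₁ + (j : ℕ) = (k : ℕ)) ↔ ((j : ℕ) = (k : ℕ) - n₁) := by omega
  simp only [e1, e2]

lemma mm_res2_zero {n₁ n₂ : ℕ} (k : Fin (n₁ + n₂ + 1)) (hk : (k : ℕ) < n₁) :
    (fun j : Fin n₂ => mmDir (n₁ + n₂) k (Fin.natAdd n₁ j)) = 0 := by
  funext j
  simp only [mmDir, Fin.coe_natAdd, Pi.zero_apply]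
  rw [if_neg (by omega), if_neg (by omega)]

/-- The direct sum of two multimodular functions (with the components of `(x,y)`
ordered naturally) is multimodular. -/
theorem multimodular_directSum {n₁ n₂ : ℕ}
    (f₁ : (Fin n₁ → ℤ) → WithTop ℝ) (f₂ : (Fin n₂ → ℤ) → WithTop ℝ)
    (h₁ : Multimodular f₁) (h₂ : Multimodular f₂) :
    Multimodular (fun z : Fin (n₁ + n₂) → ℤ =>
      f₁ (fun i => z (Fin.castAdd n₂ i)) + f₂ (fun j => z (Fin.natAdd n₁ j))) := by
  constructor
  · obtain ⟨x₁, hx₁⟩ := h₁.1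
    obtain ⟨x₂, hx₂⟩ := h₂.1
    refine ⟨Fin.append x₁ x₂, ?_⟩
    have e1 : (fun i => Fin.append x₁ x₂ (Fin.castAdd n₂ i)) = x₁ := by
      funext i; exact Fin.append_left x₁ x₂ i
    have e2 : (fun j => Fin.append x₁ x₂ (Fin.natAdd n₁ j)) = x₂ := by
      funext j; exact Fin.append_right x₁ x₂ j
    simp only [e1, e2]
    exact WithTop.add_ne_top.2 ⟨hx₁, hx₂⟩
  · intro z k l hkl
    set z₁ : Fin n₁ → ℤ := fun i => z (Fin.castAdd n₂ i) with hz₁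
    set z₂ : Fin n₂ → ℤ := fun j => z (Fin.natAdd n₁ j) with hz₂
    set a₁ : Fin n₁ → ℤ := fun i => mmDir (n₁ + n₂) k (Fin.castAdd n₂ i) with ha₁
    set b₁ : Fin n₁ → ℤ := fun i => mmDir (n₁ + n₂) l (Fin.castAdd n₂ i) with hb₁
    set a₂ : Fin n₂ → ℤ := fun j => mmDir (n₁ + n₂) k (Fin.natAdd n₁ j) with ha₂
    set b₂ : Fin n₂ → ℤ := fun j => mmDir (n₁ + n₂) l (Fin.natAdd n₁ j) with hb₂
    have hvalne : (k : ℕ) ≠ (l : ℕ) := Fin.val_ne_of_ne hkl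
    have H1 : f₁ z₁ + f₁ (z₁ + a₁ + b₁) ≤ f₁ (z₁ + a₁) + f₁ (z₁ + b₁) := by
      apply mm_blockIneq f₁ h₁.2
      rcases Nat.lt_or_ge n₁ (k : ℕ) with hk | hk
      · exact Or.inl (mm_res1_zero k hk)
      rcases Nat.lt_or_ge n₁ (l : ℕ) with hl | hl
      · exact Or.inr (Or.inl (mm_res1_zero l hl))
      · refine Or.inr (Or.inr ⟨⟨(k : ℕ), Nat.lt_succ_of_le hk⟩, ⟨(l : ℕ), Nat.lt_succ_of_le hl⟩,
          ?_, mm_res1_eq k hk, mm_res1_eq l hl⟩)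
        intro h
        rw [Fin.mk.injEq] at h
        exact hvalne h
    have H2 : f₂ z₂ + f₂ (z₂ + a₂ + b₂) ≤ f₂ (z₂ + a₂) + f₂ (z₂ + b₂) := by
      apply mm_blockIneq f₂ h₂.2
      rcases Nat.lt_or_ge (k : ℕ) n₁ with hk | hk
      · exact Or.inl (mm_res2_zero k hk)
      rcases Nat.lt_or_ge (l : ℕ) n₁ with hl | hl
      · exact Or.inr (Or.inl (mm_res2_zero l hl))
      · refine Or.inr (Or.inr ⟨⟨(k : ℕ) - n₁, by have := k.isLt; omega⟩,
          ⟨(l : ℕ) - n₁, by have := l.isLt; omega⟩,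
          ?_, mm_res2_eq k hk, mm_res2_eq l hl⟩)
        intro h
        rw [Fin.mk.injEq] at h
        omega
    show f₁ z₁ + f₂ z₂ + (f₁ (z₁ + a₁ + b₁) + f₂ (z₂ + a₂ + b₂))
        ≤ f₁ (z₁ + a₁) + f₂ (z₂ + a₂) + (f₁ (z₁ + b₁) + f₂ (z₂ + b₂))
    rw [add_add_add_comm (f₁ z₁), add_add_add_comm (f₁ (z₁ + a₁))]
    exact add_le_add H1 H2
end

section
/- The splitting of an integrally convex set is integrally convex. In particular, if S ⊆ ℤⁿ is integrally convex, then the elementary splitting T = {(y₀,y₁,y₂,…,y_n) ∈ ℤ^{n+1} : (y₀+y₁, y₂, …, y_n) ∈ S} is integrally convex. -/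
/-- The integral neighborhood `N(x)` of a real vector `x`. -/
def intNbhd {n : ℕ} (x : Fin n → ℝ) : Set (Fin n → ℤ) :=
  {z | ∀ i, |x i - (z i : ℝ)| < 1}

/-- Componentwise coercion `ℤⁿ → ℝⁿ`. -/
def toR {n : ℕ} (z : Fin n → ℤ) : Fin n → ℝ := fun i => (z i : ℝ)

/-- A nonempty set `S ⊆ ℤⁿ` is integrally convex if every `x ∈ conv(S)` lies in the
convex hull of `S ∩ N(x)`. -/
def IntegrallyConvexSet {n : ℕ} (S : Set (Fin n → ℤ)) : Prop :=
  S.Nonempty ∧ ∀ x : Fin n → ℝ,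
    x ∈ convexHull ℝ (toR '' S) → x ∈ convexHull ℝ (toR '' (S ∩ intNbhd x))

/-!
Write `x̄ = (x₀ + x₁, x₂, …)` for the merge of `x ∈ conv T`. Merging is linear, so `x̄ ∈ conv S`
and hence `x̄ ∈ conv (S ∩ N(x̄))`. Lift each `σ ∈ S ∩ N(x̄)` to `(t, σ₀ - t, σ₁, …)` with
`t = x₀ + λ (σ₀ - x₀ - x₁)`, where the slope `λ` depends only on `(x₀, x₁)`. The lift is affine
in `σ` and sends `x̄` to `x`; moreover `t` is a convex combination of `⌊t⌋` and `⌈t⌉`, and for the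
right choice of `λ` the corresponding integer points `(m, σ₀ - m, σ₁, …)` lie in `T ∩ N(x)`.
-/

open Set

/-- With `v := f + lam * (e - g)` we have `v = lam * e` if `f < g` and `v = 1 - lam * (1 - e)`
otherwise; since `e, k ∈ {0, 1}` the claim is a finite check. -/
lemma abs_lt_one_of_slope {f g lam : ℝ} {e k : ℤ} (hf : f ∈ Ico 0 1) (hg : g ∈ Ico 0 1)
    (hlam : lam = if f < g then f / g else (1 - f) / (1 - g))
    (he : |g - e| < 1) (hk : |f + lam * (e - g) - k| < 1) :
    |f - k| < 1 ∧ |g - f - e + k| < 1 := by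
  obtain ⟨hf0, hf1⟩ := hf
  obtain ⟨hg0, hg1⟩ := hg
  simp only [abs_lt] at he hk ⊢
  have he₁ : (-1 : ℤ) < e := by exact_mod_cast (by linarith : (-1 : ℝ) < e)
  have he₂ : e < 2 := by exact_mod_cast (by linarith : (e : ℝ) < 2)
  have hlam' : (f < g ∧ lam * g = f ∨ g ≤ f ∧ lam * (1 - g) = 1 - f) ∧ 0 ≤ lam ∧ lam ≤ 1 := by
    split_ifs at hlam with hfg <;> subst hlam
    · have hg : 0 < g := by linarith
      exact ⟨.inl ⟨hfg, by field_simp⟩, by positivity, by rw [div_le_one hg]; linarith⟩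
    · have hg : 0 < 1 - g := by linarith
      exact ⟨.inr ⟨by linarith, by field_simp⟩, div_nonneg (by linarith) hg.le,
        by rw [div_le_one hg]; linarith⟩
  obtain ⟨hcase, hl0, hl1⟩ := hlam'
  have hv : 0 ≤ f + lam * (e - g) ∧ f + lam * (e - g) ≤ 1 := by
    interval_cases e <;> rcases hcase with ⟨_, h⟩ | ⟨_, h⟩ <;> push_cast <;> constructor <;>
      nlinarith
  have hk₁ : (-1 : ℤ) < k := by exact_mod_cast (by linarith : (-1 : ℝ) < k)
  have hk₂ : k < 2 := by exact_mod_cast (by linarith : (k : ℝ) < 2)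
  interval_cases e <;> interval_cases k <;> rcases hcase with ⟨_, h⟩ | ⟨_, h⟩ <;>
    push_cast at he hk ⊢ <;> refine ⟨⟨?_, ?_⟩, ?_, ?_⟩ <;> nlinarith

/-- The slope, in the `(y₀, y₀ + y₁)`-plane, of the line through `(a, a + b)` and the lattice
point `(⌊a⌋, ⌊a + b⌋)` if `fract a < fract (a + b)`, and `(⌊a⌋ + 1, ⌊a + b⌋ + 1)` otherwise. -/
noncomputable def splitSlope (a b : ℝ) : ℝ :=
  if Int.fract a < Int.fract (a + b) then Int.fract a / Int.fract (a + b)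
  else (1 - Int.fract a) / (1 - Int.fract (a + b))

lemma abs_sub_lt_one_of_splitSlope {a b : ℝ} {s m : ℤ} (hs : |a + b - s| < 1)
    (hm : |a + splitSlope a b * (s - (a + b)) - m| < 1) :
    |a - m| < 1 ∧ |b - (s - m)| < 1 := by
  obtain ⟨h0, h1⟩ := abs_lt_one_of_slope (lam := splitSlope a b) (e := s - ⌊a + b⌋)
    (k := m - ⌊a⌋) ⟨Int.fract_nonneg a, Int.fract_lt_one a⟩
    ⟨Int.fract_nonneg _, Int.fract_lt_one _⟩ rfl
    (by convert hs using 2; push_cast [Int.fract]; ring)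
    (by convert hm using 2; push_cast [Int.fract]; ring)
  constructor
  · convert h0 using 2; push_cast [Int.fract]; ring
  · convert h1 using 2; push_cast [Int.fract]; ring

lemma mem_convexHull_intCast_abs_sub_lt_one (t : ℝ) :
    t ∈ convexHull ℝ (((↑) : ℤ → ℝ) '' {m | |t - m| < 1}) := by
  refine segment_subset_convexHull (mem_image_of_mem _ (x := ⌊t⌋) ?_)
    (mem_image_of_mem _ (x := ⌈t⌉) ?_) ?_
  · rw [mem_ofPred_eq, abs_sub_lt_iff]
    constructor <;> linarith [Int.floor_le t, Int.lt_floor_add_one t]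
  · rw [mem_ofPred_eq, abs_sub_lt_iff]
    constructor <;> linarith [Int.le_ceil t, Int.ceil_lt_add_one t]
  · rw [segment_eq_Icc (by exact_mod_cast Int.floor_le_ceil t)]
    exact ⟨Int.floor_le t, Int.le_ceil t⟩

lemma AffineMap.apply_mem_convexHull_of_forall_int {E : Type*} [AddCommGroup E] [Module ℝ E]
    (f : ℝ →ᵃ[ℝ] E) {A : Set E} (t : ℝ) (hA : ∀ m : ℤ, |t - m| < 1 → f m ∈ A) :
    f t ∈ convexHull ℝ A :=
  convexHull_min (by rintro _ ⟨m, hm, rfl⟩; exact subset_convexHull ℝ A (hA m hm))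
    ((convex_convexHull ℝ A).affine_preimage f) (mem_convexHull_intCast_abs_sub_lt_one t)

lemma integrallyConvexSet_univ_fin_one : IntegrallyConvexSet (univ : Set (Fin 1 → ℤ)) := by
  refine ⟨univ_nonempty, fun x _ => ?_⟩
  let f := (LinearEquiv.funUnique (Fin 1) ℝ ℝ).symm.toLinearMap.toAffineMap
  have hfx : f (x 0) = x := by ext i; simp [f, Subsingleton.elim i 0]
  rw [← hfx]
  refine f.apply_mem_convexHull_of_forall_int _ fun m hm => ⟨fun _ => m, ⟨trivial, ?_⟩, ?_⟩
  · intro i; rwa [Subsingleton.elim i 0]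
  · ext i; simp [f, toR]

section MergeSplit

variable {R : Type*} {n : ℕ}

def mergeHead [Semiring R] : (Fin (n + 2) → R) →ₗ[R] (Fin (n + 1) → R) where
  toFun y := Fin.cons (y 0 + y 1) fun i => y i.succ.succ
  map_add' y z := by
    ext i; refine Fin.cases ?_ (fun i => ?_) i <;> simp [add_add_add_comm]
  map_smul' r y := by
    ext i; refine Fin.cases ?_ (fun i => ?_) i <;> simp [mul_add]

lemma ite_eq_mergeHead [Semiring R] (y : Fin (n + 2) → R) :
    (fun i : Fin (n + 1) => if (i : ℕ) = 0 then y 0 + y 1 else y i.succ) = mergeHead y := by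
  ext i; refine Fin.cases ?_ (fun i => ?_) i <;> simp [mergeHead]

variable [Ring R]

def splitHead : (R × (Fin (n + 1) → R)) →ₗ[R] (Fin (n + 2) → R) where
  toFun p := Fin.cons p.1 (Fin.cons (p.2 0 - p.1) (Fin.tail p.2))
  map_add' p q := by
    ext i; refine Fin.cases ?_ (Fin.cases ?_ fun i => ?_) i <;> simp [Fin.tail]; abel
  map_smul' r p := by
    ext i; refine Fin.cases ?_ (Fin.cases ?_ fun i => ?_) i <;> simp [Fin.tail, mul_sub]

@[simp]
lemma mergeHead_splitHead (p : R × (Fin (n + 1) → R)) : mergeHead (splitHead p) = p.2 := by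
  ext i; refine Fin.cases ?_ (fun i => ?_) i <;> simp [mergeHead, splitHead, Fin.tail]

lemma splitHead_mergeHead (y : Fin (n + 2) → R) : splitHead (y 0, mergeHead y) = y := by
  ext i; refine Fin.cases ?_ (Fin.cases ?_ fun i => ?_) i <;> simp [mergeHead, splitHead]

end MergeSplit

section Lift

variable {n : ℕ} {S : Set (Fin (n + 1) → ℤ)}

lemma toR_mergeHead (y : Fin (n + 2) → ℤ) : toR (mergeHead y) = mergeHead (toR y) := by
  ext i; refine Fin.cases ?_ (fun i => ?_) i <;> simp [mergeHead, toR]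

lemma toR_splitHead (m : ℤ) (σ : Fin (n + 1) → ℤ) :
    toR (splitHead (m, σ)) = splitHead ((m : ℝ), toR σ) := by
  ext i; refine Fin.cases ?_ (Fin.cases ?_ fun i => ?_) i <;> simp [splitHead, toR, Fin.tail]

lemma mergeHead_mem_convexHull {x : Fin (n + 2) → ℝ}
    (hx : x ∈ convexHull ℝ (toR '' (mergeHead ⁻¹' S))) :
    mergeHead x ∈ convexHull ℝ (toR '' S) :=
  convexHull_min (by rintro _ ⟨y, hy, rfl⟩; exact subset_convexHull ℝ _ ⟨_, hy, toR_mergeHead y⟩)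
    ((convex_convexHull ℝ _).linear_preimage mergeHead) hx

lemma splitHead_mem_intNbhd {x : Fin (n + 2) → ℝ} {σ : Fin (n + 1) → ℤ} {m : ℤ}
    (hσ : σ ∈ intNbhd (mergeHead x)) (h0 : |x 0 - m| < 1) (h1 : |x 1 - (σ 0 - m)| < 1) :
    splitHead (m, σ) ∈ intNbhd x := by
  intro i
  refine Fin.cases ?_ (Fin.cases ?_ fun i => ?_) i
  · simpa [splitHead] using h0
  · simpa [splitHead] using h1
  · simpa [splitHead, mergeHead, Fin.tail] using hσ i.succ

lemma splitHead_mem_convexHull {x : Fin (n + 2) → ℝ} {σ : Fin (n + 1) → ℤ}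
    (hσ : σ ∈ S ∩ intNbhd (mergeHead x)) :
    splitHead (x 0 + splitSlope (x 0) (x 1) * (σ 0 - (x 0 + x 1)), toR σ) ∈
      convexHull ℝ (toR '' (mergeHead ⁻¹' S ∩ intNbhd x)) := by
  let L : ℝ →ᵃ[ℝ] (Fin (n + 2) → ℝ) := splitHead.toAffineMap.comp
    ((AffineMap.id ℝ ℝ).prod (AffineMap.const ℝ ℝ (toR σ)))
  refine L.apply_mem_convexHull_of_forall_int _ fun m hm => ⟨splitHead (m, σ), ⟨?_, ?_⟩, ?_⟩
  · simpa using hσ.1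
  · have hs : |x 0 + x 1 - σ 0| < 1 := by simpa [mergeHead] using hσ.2 0
    obtain ⟨h0, h1⟩ := abs_sub_lt_one_of_splitSlope hs hm
    exact splitHead_mem_intNbhd hσ.2 h0 h1
  · simp [L, toR_splitHead]

theorem IntegrallyConvexSet.preimage_mergeHead (hS : IntegrallyConvexSet S) :
    IntegrallyConvexSet (mergeHead ⁻¹' S) := by
  obtain ⟨⟨s₀, hs₀⟩, hS⟩ := hS
  refine ⟨⟨splitHead (0, s₀), by simpa using hs₀⟩, fun x hx => ?_⟩
  let φ : (Fin (n + 1) → ℝ) →ᵃ[ℝ] ℝ := AffineMap.const ℝ _ (x 0) +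
    splitSlope (x 0) (x 1) • ((LinearMap.proj 0).toAffineMap - AffineMap.const ℝ _ (x 0 + x 1))
  let Λ := splitHead.toAffineMap.comp (φ.prod (AffineMap.id ℝ _))
  have hΛ : Λ (mergeHead x) = x := by
    simpa [Λ, φ, mergeHead] using splitHead_mergeHead x
  have hΛS : Λ (mergeHead x) ∈ convexHull ℝ (toR '' (mergeHead ⁻¹' S ∩ intNbhd x)) :=
    convexHull_min (by rintro _ ⟨σ, hσ, rfl⟩; simpa [Λ, φ, toR] using splitHead_mem_convexHull hσ)
      ((convex_convexHull ℝ _).affine_preimage Λ) (hS _ (mergeHead_mem_convexHull hx))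
  rwa [hΛ] at hΛS

end Lift

/-- The elementary splitting
`T = {(y₀,y₁,y₂,…,y_n) : (y₀+y₁, y₂, …, y_n) ∈ S}` of an integrally convex set `S`
is integrally convex. -/
theorem splitting_integrallyConvexSet {n : ℕ} (S : Set (Fin n → ℤ))
    (hS : IntegrallyConvexSet S) :
    IntegrallyConvexSet {y : Fin (n + 1) → ℤ |
      (fun i : Fin n => if (i : ℕ) = 0 then y 0 + y 1 else y i.succ) ∈ S} := by
  cases n with
  | zero =>
    rw [Subsingleton.eq_univ_of_nonempty hS.1]
    simpa using integrallyConvexSet_univ_fin_one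
  | succ n =>
    simp_rw [ite_eq_mergeHead]
    exact hS.preimage_mergeHead
end

section
/- The splitting of an integrally convex function is integrally convex. In particular, if f: ℤⁿ → ℝ ∪ {+∞} is integrally convex, then g: ℤ^{n+1} → ℝ ∪ {+∞} defined by g(y₀,y₁,y₂,…,y_n) = f(y₀+y₁, y₂, …, y_n) is integrally convex. -/
/-- The local convex extension `f̃` of `f : ℤⁿ → ℝ ∪ {+∞}`: the infimum of the values
of convex combinations of points of the integral neighborhood `N(x)` representing `x`. -/
noncomputable def locConvExt {n : ℕ} (f : (Fin n → ℤ) → EReal) (x : Fin n → ℝ) : EReal :=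
  sInf {v | ∃ (t : Finset (Fin n → ℤ)) (w : (Fin n → ℤ) → ℝ),
    (∀ z ∈ t, z ∈ intNbhd x) ∧ (∀ z ∈ t, 0 ≤ w z) ∧ (∑ z ∈ t, w z) = 1 ∧
    (∑ z ∈ t, w z • toR z) = x ∧ v = ∑ z ∈ t, (w z : EReal) * f z}

/-- A function `f : ℤⁿ → ℝ ∪ {+∞}` with nonempty effective domain is integrally convex
iff its local convex extension satisfies `f̃((x+y)/2) ≤ (f(x)+f(y))/2` for all integer
`x, y` (Theorem A.1 of Moriguchi–Murota–Tamura–Tardella). -/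
def IntegrallyConvexFn {n : ℕ} (f : (Fin n → ℤ) → EReal) : Prop :=
  (∃ x, f x ≠ ⊤) ∧
  ∀ x y : Fin n → ℤ,
    locConvExt f (fun i => ((x i + y i : ℤ) : ℝ) / 2) ≤ (f x + f y) / 2

def splitPush {n : ℕ} (y : Fin (n + 1) → ℤ) : Fin n → ℤ :=
  fun i : Fin n => if (i : ℕ) = 0 then y 0 + y 1 else y i.succ

def splitLift {n : ℕ} (A : ℤ) (z : Fin n → ℤ) : Fin (n + 1) → ℤ :=
  fun j => if hj : j = 0 then A
    else if ((j.pred hj : Fin n) : ℕ) = 0 then z (j.pred hj) - A else z (j.pred hj)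

lemma splitLift_zero {n : ℕ} (A : ℤ) (z : Fin n → ℤ) : splitLift A z 0 = A := by
  simp [splitLift]

lemma splitLift_succ {n : ℕ} (A : ℤ) (z : Fin n → ℤ) (i : Fin n) :
    splitLift A z i.succ = if (i : ℕ) = 0 then z i - A else z i := by
  simp [splitLift, Fin.succ_ne_zero, Fin.pred_succ]

lemma succ_eq_one' {n : ℕ} (i : Fin n) (hi : (i : ℕ) = 0) : i.succ = (1 : Fin (n + 1)) := by
  have hn : 0 < n := i.pos
  ext
  simp [Fin.val_succ, hi, Fin.val_one', Nat.mod_eq_of_lt (by omega : 1 < n + 1)]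

lemma splitLift_one {n : ℕ} (A : ℤ) (z : Fin n → ℤ) (hn : 0 < n) :
    splitLift A z (1 : Fin (n + 1)) = z ⟨0, hn⟩ - A := by
  rw [← succ_eq_one' ⟨0, hn⟩ rfl, splitLift_succ]
  simp

lemma splitPush_splitLift {n : ℕ} (A : ℤ) (z : Fin n → ℤ) :
    splitPush (splitLift A z) = z := by
  funext i
  by_cases hi : (i : ℕ) = 0
  · have hn : 0 < n := i.pos
    have hieq : i = ⟨0, hn⟩ := Fin.ext hi
    simp only [splitPush]
    rw [if_pos hi, splitLift_zero, splitLift_one A z hn, hieq]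
    ring
  · simp only [splitPush]
    rw [if_neg hi, splitLift_succ, if_neg hi]

lemma mem_single {n : ℕ} (f : (Fin n → ℤ) → EReal) (c : Fin (n + 1) → ℤ)
    (v : EReal) (t : Finset (Fin n → ℤ)) (w : (Fin n → ℤ) → ℝ)
    (hN : ∀ z ∈ t, ∀ i : Fin n,
      |(if (i : ℕ) = 0 then (c 0 : ℝ)/2 + (c 1 : ℝ)/2 else (c i.succ : ℝ)/2) - (z i : ℝ)| < 1)
    (hw0 : ∀ z ∈ t, 0 ≤ w z) (hw1 : ∑ z ∈ t, w z = 1)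
    (hcomp : ∀ i : Fin n, ∑ z ∈ t, w z * (z i : ℝ)
      = (if (i : ℕ) = 0 then (c 0 : ℝ)/2 + (c 1 : ℝ)/2 else (c i.succ : ℝ)/2))
    (hval : v = ∑ z ∈ t, (w z : EReal) * f z)
    (A : (Fin n → ℤ) → ℤ)
    (hA0 : ∀ z ∈ t, |(c 0 : ℝ)/2 - (A z : ℝ)| < 1)
    (hA1 : ∀ z ∈ t, ∀ i : Fin n, (i : ℕ) = 0 → |(c 1 : ℝ)/2 - ((z i : ℝ) - (A z : ℝ))| < 1)
    (hAsum : ∑ z ∈ t, w z * (A z : ℝ) = (c 0 : ℝ)/2) :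
    ∃ (t' : Finset (Fin (n+1) → ℤ)) (w' : (Fin (n+1) → ℤ) → ℝ),
      (∀ p ∈ t', p ∈ intNbhd (fun j => (c j : ℝ)/2)) ∧ (∀ p ∈ t', 0 ≤ w' p) ∧
      (∑ p ∈ t', w' p) = 1 ∧
      (∑ p ∈ t', w' p • toR p) = (fun j => (c j : ℝ)/2) ∧
      v = ∑ p ∈ t', (w' p : EReal) * f (splitPush p) := by
  have hinj : ∀ z₁ ∈ t, ∀ z₂ ∈ t,
      (fun z => splitLift (A z) z) z₁ = (fun z => splitLift (A z) z) z₂ → z₁ = z₂ := by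
    intro z₁ _ z₂ _ h
    have := congrArg splitPush h
    rwa [splitPush_splitLift, splitPush_splitLift] at this
  refine ⟨t.image (fun z => splitLift (A z) z), fun p => w (splitPush p), ?_, ?_, ?_, ?_, ?_⟩
  · intro p hp
    obtain ⟨z, hz, rfl⟩ := Finset.mem_image.mp hp
    simp only [intNbhd, Set.mem_setOf_eq]
    intro j
    induction j using Fin.cases with
    | zero => rw [splitLift_zero]; exact hA0 z hz
    | succ i =>
        rw [splitLift_succ]
        by_cases hi : (i : ℕ) = 0
        · rw [if_pos hi]
          have h1 : (c i.succ : ℝ) = (c 1 : ℝ) := by rw [succ_eq_one' i hi]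
          push_cast
          rw [h1]
          exact hA1 z hz i hi
        · rw [if_neg hi]
          have h := hN z hz i
          rwa [if_neg hi] at h
  · intro p hp
    obtain ⟨z, hz, rfl⟩ := Finset.mem_image.mp hp
    simp only [splitPush_splitLift]
    exact hw0 z hz
  · rw [Finset.sum_image hinj]
    simp only [splitPush_splitLift]
    exact hw1
  · funext j
    rw [Finset.sum_apply, Finset.sum_image hinj]
    simp only [splitPush_splitLift, Pi.smul_apply, smul_eq_mul, toR]
    induction j using Fin.cases with
    | zero => simp only [splitLift_zero]; exact hAsum
    | succ i =>
        simp only [splitLift_succ]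
        by_cases hi : (i : ℕ) = 0
        · simp only [if_pos hi]
          push_cast
          have expand : ∑ z ∈ t, w z * ((z i : ℝ) - (A z : ℝ))
              = (∑ z ∈ t, w z * (z i : ℝ)) - ∑ z ∈ t, w z * (A z : ℝ) := by
            rw [← Finset.sum_sub_distrib]
            exact Finset.sum_congr rfl fun z _ => by ring
          have h1 : (c i.succ : ℝ) = (c 1 : ℝ) := by rw [succ_eq_one' i hi]
          rw [expand, hcomp i, if_pos hi, hAsum, h1]
          ring
        · simp only [if_neg hi]
          have h := hcomp i
          rwa [if_neg hi] at h
  · rw [Finset.sum_image hinj]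
    simp only [splitPush_splitLift]
    exact hval

lemma mem_double {n : ℕ} (f : (Fin n → ℤ) → EReal) (c : Fin (n + 1) → ℤ)
    (v : EReal) (t : Finset (Fin n → ℤ)) (w : (Fin n → ℤ) → ℝ)
    (hN : ∀ z ∈ t, ∀ i : Fin n,
      |(if (i : ℕ) = 0 then (c 0 : ℝ)/2 + (c 1 : ℝ)/2 else (c i.succ : ℝ)/2) - (z i : ℝ)| < 1)
    (hw0 : ∀ z ∈ t, 0 ≤ w z) (hw1 : ∑ z ∈ t, w z = 1)
    (hcomp : ∀ i : Fin n, ∑ z ∈ t, w z * (z i : ℝ)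
      = (if (i : ℕ) = 0 then (c 0 : ℝ)/2 + (c 1 : ℝ)/2 else (c i.succ : ℝ)/2))
    (hval : v = ∑ z ∈ t, (w z : EReal) * f z)
    (k l : ℤ) (hk : c 0 = 2 * k + 1) (hl : c 1 = 2 * l + 1) :
    ∃ (t' : Finset (Fin (n+1) → ℤ)) (w' : (Fin (n+1) → ℤ) → ℝ),
      (∀ p ∈ t', p ∈ intNbhd (fun j => (c j : ℝ)/2)) ∧ (∀ p ∈ t', 0 ≤ w' p) ∧
      (∑ p ∈ t', w' p) = 1 ∧
      (∑ p ∈ t', w' p • toR p) = (fun j => (c j : ℝ)/2) ∧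
      v = ∑ p ∈ t', (w' p : EReal) * f (splitPush p) := by
  have hkR : (c 0 : ℝ) = 2 * (k : ℝ) + 1 := by exact_mod_cast congrArg (fun m : ℤ => (m : ℝ)) hk
  have hlR : (c 1 : ℝ) = 2 * (l : ℝ) + 1 := by exact_mod_cast congrArg (fun m : ℤ => (m : ℝ)) hl
  -- forced value of coordinate 0 of points of t
  have hforce : ∀ z ∈ t, ∀ i : Fin n, (i : ℕ) = 0 → z i = k + l + 1 := by
    intro z hz i hi
    have h := hN z hz i
    rw [if_pos hi] at h
    have h2 : |((k + l + 1 - z i : ℤ) : ℝ)| < 1 := by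
      push_cast
      have : ((k : ℝ) + l + 1 - z i) = (c 0 : ℝ)/2 + (c 1 : ℝ)/2 - z i := by
        rw [hkR, hlR]; ring
      rw [this]; exact h
    have h3 : |(k + l + 1 - z i : ℤ)| < 1 := by exact_mod_cast h2
    rw [abs_lt] at h3
    omega
  have hinj1 : ∀ z₁ ∈ t, ∀ z₂ ∈ t, splitLift k z₁ = splitLift k z₂ → z₁ = z₂ := by
    intro z₁ _ z₂ _ h
    have := congrArg splitPush h
    rwa [splitPush_splitLift, splitPush_splitLift] at this
  have hinj2 : ∀ z₁ ∈ t, ∀ z₂ ∈ t, splitLift (k+1) z₁ = splitLift (k+1) z₂ → z₁ = z₂ := by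
    intro z₁ _ z₂ _ h
    have := congrArg splitPush h
    rwa [splitPush_splitLift, splitPush_splitLift] at this
  have hdisj : Disjoint (t.image (splitLift k)) (t.image (splitLift (k+1))) := by
    rw [Finset.disjoint_left]
    rintro p hp1 hp2
    obtain ⟨z1, _, rfl⟩ := Finset.mem_image.mp hp1
    obtain ⟨z2, _, h2⟩ := Finset.mem_image.mp hp2
    have := congrFun h2 0
    rw [splitLift_zero, splitLift_zero] at this
    omega
  refine ⟨t.image (splitLift k) ∪ t.image (splitLift (k+1)),
    fun p => w (splitPush p) / 2, ?_, ?_, ?_, ?_, ?_⟩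
  · intro p hp
    rcases Finset.mem_union.mp hp with hp1 | hp1
    all_goals obtain ⟨z, hz, rfl⟩ := Finset.mem_image.mp hp1
    all_goals simp only [intNbhd, Set.mem_setOf_eq]
    all_goals intro j
    all_goals induction j using Fin.cases with
    | zero =>
        rw [splitLift_zero]
        push_cast
        rw [hkR]
        rw [abs_lt]; constructor <;> linarith
    | succ i =>
        rw [splitLift_succ]
        by_cases hi : (i : ℕ) = 0
        · rw [if_pos hi]
          have hz0 := hforce z hz i hi
          have h1 : (c i.succ : ℝ) = (c 1 : ℝ) := by rw [succ_eq_one' i hi]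
          rw [h1, hlR]
          push_cast [hz0]
          rw [abs_lt]; constructor <;> linarith
        · rw [if_neg hi]
          have h := hN z hz i
          rwa [if_neg hi] at h
  · intro p hp
    rcases Finset.mem_union.mp hp with hp1 | hp1 <;>
      obtain ⟨z, hz, rfl⟩ := Finset.mem_image.mp hp1 <;>
      simp only [splitPush_splitLift] <;> linarith [hw0 z hz]
  · rw [Finset.sum_union hdisj, Finset.sum_image hinj1, Finset.sum_image hinj2]
    simp only [splitPush_splitLift]
    rw [← Finset.sum_div, hw1]
    norm_num
  · funext j
    rw [Finset.sum_apply, Finset.sum_union hdisj, Finset.sum_image hinj1,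
      Finset.sum_image hinj2]
    simp only [splitPush_splitLift, Pi.smul_apply, smul_eq_mul, toR]
    induction j using Fin.cases with
    | zero =>
        simp only [splitLift_zero]
        have e1 : ∑ z ∈ t, w z / 2 * ((k : ℤ) : ℝ) + ∑ z ∈ t, w z / 2 * (((k : ℤ) + 1 : ℤ) : ℝ)
            = ∑ z ∈ t, w z * ((k : ℝ) + 1/2) := by
          rw [← Finset.sum_add_distrib]
          exact Finset.sum_congr rfl fun z _ => by push_cast; ring
        rw [e1, ← Finset.sum_mul, hw1, one_mul, hkR]
        ring
    | succ i =>
        simp only [splitLift_succ]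
        by_cases hi : (i : ℕ) = 0
        · simp only [if_pos hi]
          have e1 : ∑ x ∈ t, w x / 2 * ((x i - k : ℤ) : ℝ)
                + ∑ x ∈ t, w x / 2 * ((x i - (k+1) : ℤ) : ℝ)
              = ∑ x ∈ t, (w x * ((x i : ℤ) : ℝ) - w x * ((k : ℝ) + 1/2)) := by
            rw [← Finset.sum_add_distrib]
            exact Finset.sum_congr rfl fun z _ => by push_cast; ring
          rw [e1, Finset.sum_sub_distrib, hcomp i, if_pos hi, ← Finset.sum_mul, hw1, one_mul]
          have h1 : (c i.succ : ℝ) = (c 1 : ℝ) := by rw [succ_eq_one' i hi]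
          rw [h1, hkR, hlR]
          ring
        · simp only [if_neg hi]
          have e1 : ∑ x ∈ t, w x / 2 * ((x i : ℤ) : ℝ) + ∑ x ∈ t, w x / 2 * ((x i : ℤ) : ℝ)
              = ∑ x ∈ t, w x * ((x i : ℤ) : ℝ) := by
            rw [← Finset.sum_add_distrib]
            exact Finset.sum_congr rfl fun z _ => by ring
          rw [e1]
          have h := hcomp i
          rwa [if_neg hi] at h
  · rw [Finset.sum_union hdisj, Finset.sum_image hinj1, Finset.sum_image hinj2]
    simp only [splitPush_splitLift]
    rw [hval, ← Finset.sum_add_distrib]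
    refine Finset.sum_congr rfl fun z hz => ?_
    have hwz := hw0 z hz
    have h2 : (0 : EReal) ≤ ((w z / 2 : ℝ) : EReal) := by
      exact_mod_cast (by linarith : (0:ℝ) ≤ w z / 2)
    rw [← EReal.right_distrib_of_nonneg h2 h2]
    congr 1
    rw [← EReal.coe_add]
    norm_num

lemma key_le {n : ℕ} (f : (Fin n → ℤ) → EReal) (c : Fin (n + 1) → ℤ) :
    locConvExt (fun y => f (splitPush y)) (fun j => (c j : ℝ) / 2) ≤
    locConvExt f (fun i : Fin n =>
      if (i : ℕ) = 0 then (c 0 : ℝ)/2 + (c 1 : ℝ)/2 else (c i.succ : ℝ)/2) := by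
  apply sInf_le_sInf
  rintro v ⟨t, w, hN, hw0, hw1, hsum, hval⟩
  have hN' : ∀ z ∈ t, ∀ i : Fin n,
      |(if (i : ℕ) = 0 then (c 0 : ℝ)/2 + (c 1 : ℝ)/2 else (c i.succ : ℝ)/2) - (z i : ℝ)| < 1 :=
    fun z hz i => hN z hz i
  have hcomp : ∀ i : Fin n, ∑ z ∈ t, w z * (z i : ℝ)
      = (if (i : ℕ) = 0 then (c 0 : ℝ)/2 + (c 1 : ℝ)/2 else (c i.succ : ℝ)/2) := by
    intro i
    have h := congrFun hsum i
    simpa [toR, Finset.sum_apply] using h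
  rcases Int.even_or_odd (c 0) with ⟨e, he⟩ | ⟨k, hk⟩
  · -- c 0 even : constant lift A = e
    have heR : (c 0 : ℝ) = (e : ℝ) + (e : ℝ) := by exact_mod_cast congrArg (fun m : ℤ => (m : ℝ)) he
    refine mem_single f c v t w hN' hw0 hw1 hcomp hval (fun _ => e) ?_ ?_ ?_
    · intro z _
      rw [heR]
      norm_num
    · intro z hz i hi
      have h := hN' z hz i
      rw [if_pos hi] at h
      have : (c 1 : ℝ)/2 - ((z i : ℝ) - (e : ℝ))
          = ((c 0 : ℝ)/2 + (c 1 : ℝ)/2) - (z i : ℝ) := by rw [heR]; ring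
      rw [this]; exact h
    · rw [← Finset.sum_mul, hw1, one_mul, heR]; ring
  · rcases Int.even_or_odd (c 1) with ⟨e1, he1⟩ | ⟨l, hl⟩
    · -- c 0 odd, c 1 even
      have hkR : (c 0 : ℝ) = 2*(k : ℝ) + 1 := by exact_mod_cast congrArg (fun m : ℤ => (m : ℝ)) hk
      have he1R : (c 1 : ℝ) = (e1 : ℝ) + (e1 : ℝ) := by
        exact_mod_cast congrArg (fun m : ℤ => (m : ℝ)) he1
      have hn : 0 < n := by
        rcases n with _ | m
        · exfalso
          have h01 : (0 : Fin 1) = 1 := Subsingleton.elim _ _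
          have : c 0 = c 1 := congrArg c h01
          omega
        · exact Nat.succ_pos m
      set i0 : Fin n := ⟨0, hn⟩ with hi0
      refine mem_single f c v t w hN' hw0 hw1 hcomp hval (fun z => z i0 - e1) ?_ ?_ ?_
      · intro z hz
        have h := hN' z hz i0
        rw [if_pos rfl] at h
        have : (c 0 : ℝ)/2 - ((z i0 - e1 : ℤ) : ℝ)
            = ((c 0 : ℝ)/2 + (c 1 : ℝ)/2) - (z i0 : ℝ) := by push_cast; rw [he1R]; ring
        rw [this]; exact h
      · intro z hz i hi
        have hii0 : i = i0 := Fin.ext hi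
        rw [hii0]
        have : (c 1 : ℝ)/2 - ((z i0 : ℝ) - ((z i0 - e1 : ℤ) : ℝ)) = 0 := by push_cast; rw [he1R]; ring
        rw [this]
        norm_num
      · have e2 : ∑ z ∈ t, w z * ((z i0 - e1 : ℤ) : ℝ)
            = ∑ z ∈ t, (w z * (z i0 : ℝ) - w z * (e1 : ℝ)) :=
          Finset.sum_congr rfl fun z _ => by push_cast; ring
        rw [e2, Finset.sum_sub_distrib, hcomp i0, if_pos rfl, ← Finset.sum_mul, hw1, one_mul,
          he1R]
        ring
    · exact mem_double f c v t w hN' hw0 hw1 hcomp hval k l hk hl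

/-- The elementary splitting `g(y₀,y₁,y₂,…,y_n) = f(y₀+y₁, y₂, …, y_n)` of an
integrally convex function `f : ℤⁿ → ℝ ∪ {+∞}` is integrally convex. -/
theorem splitting_integrallyConvexFn {n : ℕ} (f : (Fin n → ℤ) → EReal)
    (hbot : ∀ v, f v ≠ ⊥) (hf : IntegrallyConvexFn f) :
    IntegrallyConvexFn (fun y : Fin (n + 1) → ℤ =>
      f (fun i : Fin n => if (i : ℕ) = 0 then y 0 + y 1 else y i.succ)) := by
  obtain ⟨⟨x₀, hx₀⟩, hmid⟩ := hf
  constructor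
  · refine ⟨splitLift 0 x₀, ?_⟩
    show f (splitPush (splitLift 0 x₀)) ≠ ⊤
    rwa [splitPush_splitLift]
  · intro x y
    have hkey := key_le f (fun i => x i + y i)
    have h2 := hmid (splitPush x) (splitPush y)
    have heq : (fun i : Fin n => ((splitPush x i + splitPush y i : ℤ) : ℝ) / 2)
        = (fun i : Fin n => if (i : ℕ) = 0
            then ((x 0 + y 0 : ℤ) : ℝ)/2 + ((x 1 + y 1 : ℤ) : ℝ)/2
            else ((x i.succ + y i.succ : ℤ) : ℝ)/2) := by
      funext i
      by_cases hi : (i : ℕ) = 0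
      · simp only [splitPush, if_pos hi]
        push_cast
        ring
      · simp only [splitPush, if_neg hi]
    rw [heq] at h2
    exact hkey.trans h2
end

section
/- The splitting of a multimodular function is multimodular: if f: ℤⁿ → ℝ ∪ {+∞} is multimodular, then g: ℤ^{n+1} → ℝ ∪ {+∞} defined by g(y₁,…,y_{k−1}, y′_k, y″_k, y_{k+1},…,y_n) = f(y₁,…,y_{k−1}, y′_k + y″_k, y_{k+1},…,y_n) is multimodular (under the natural ordering of components). -/
/-- The elementary splitting map. -/
def splitMap {n : ℕ} (k : Fin n) (y : Fin (n + 1) → ℤ) : Fin n → ℤ := fun i =>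
  if (i : ℕ) < (k : ℕ) then y (Fin.castSucc i)
  else if i = k then y (Fin.castSucc i) + y i.succ
  else y i.succ

lemma splitMap_add {n : ℕ} (k : Fin n) (y z : Fin (n + 1) → ℤ) :
    splitMap k (y + z) = splitMap k y + splitMap k z := by
  funext i
  simp only [splitMap, Pi.add_apply]
  split_ifs <;> ring

/-- A right inverse of the splitting map. -/
def splitWitness {n : ℕ} (k : Fin n) (x : Fin n → ℤ) : Fin (n + 1) → ℤ := fun j =>
  if h : (j : ℕ) ≤ (k : ℕ) then x ⟨j, by have := k.isLt; omega⟩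
  else if (j : ℕ) = (k : ℕ) + 1 then 0
  else x ⟨(j : ℕ) - 1, by have := j.isLt; have := k.isLt; omega⟩

lemma splitMap_splitWitness {n : ℕ} (k : Fin n) (x : Fin n → ℤ) :
    splitMap k (splitWitness k x) = x := by
  funext i
  have hk := k.isLt
  have hi := i.isLt
  simp only [splitMap, splitWitness, Fin.coe_castSucc, Fin.val_succ, Fin.ext_iff]
  split_ifs <;>
    first
    | (exfalso; omega)
    | rfl
    | rw [add_zero]

/-- The index map on directions. -/
def psiMap {n : ℕ} (k : Fin n) (K : Fin (n + 2)) : Fin (n + 1) :=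
  if h : (K : ℕ) ≤ (k : ℕ) then ⟨K, by have := k.isLt; omega⟩
  else ⟨(K : ℕ) - 1, by have := K.isLt; omega⟩

lemma splitMap_mmDir {n : ℕ} (k : Fin n) (K : Fin (n + 2)) :
    splitMap k (mmDir (n + 1) K) =
      if (K : ℕ) = (k : ℕ) + 1 then 0 else mmDir n (psiMap k K) := by
  by_cases hk : (K : ℕ) = (k : ℕ) + 1
  · rw [if_pos hk]
    funext i
    simp only [splitMap, mmDir, Pi.zero_apply, Fin.coe_castSucc, Fin.val_succ, Fin.ext_iff]
    split_ifs <;> omega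
  · rw [if_neg hk]
    funext i
    rcases le_or_gt (K : ℕ) (k : ℕ) with h | h
    · have hv : ((psiMap k K : Fin (n + 1)) : ℕ) = (K : ℕ) := by simp [psiMap, h]
      simp only [splitMap, mmDir, hv, Fin.coe_castSucc, Fin.val_succ, Fin.ext_iff]
      split_ifs <;> omega
    · have hv : ((psiMap k K : Fin (n + 1)) : ℕ) = (K : ℕ) - 1 := by
        simp [psiMap, h.not_ge]
      simp only [splitMap, mmDir, hv, Fin.coe_castSucc, Fin.val_succ, Fin.ext_iff]
      split_ifs <;> omega

lemma psiMap_inj {n : ℕ} (k : Fin n) {K L : Fin (n + 2)} (hKL : K ≠ L)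
    (hK : (K : ℕ) ≠ (k : ℕ) + 1) (hL : (L : ℕ) ≠ (k : ℕ) + 1) :
    psiMap k K ≠ psiMap k L := by
  have h1 : (K : ℕ) ≠ (L : ℕ) := fun h => hKL (Fin.ext h)
  simp only [psiMap]
  split_ifs <;> simp only [ne_eq, Fin.ext_iff] <;> omega

/-- The elementary splitting (at position `k`, under the natural ordering of the
components) of a multimodular function is multimodular:
`g(y₁,…,y_{k−1}, y′_k, y″_k, y_{k+1},…,y_n) = f(y₁,…,y_{k−1}, y′_k + y″_k, y_{k+1},…,y_n)`. -/
theorem splitting_multimodular {n : ℕ} (k : Fin n)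
    (f : (Fin n → ℤ) → WithTop ℝ) (hf : Multimodular f) :
    Multimodular (fun y : Fin (n + 1) → ℤ =>
      f (fun i : Fin n =>
        if (i : ℕ) < (k : ℕ) then y (Fin.castSucc i)
        else if i = k then y (Fin.castSucc i) + y i.succ
        else y i.succ)) := by
  obtain ⟨⟨x, hx⟩, hmm⟩ := hf
  constructor
  · refine ⟨splitWitness k x, ?_⟩
    show f (splitMap k (splitWitness k x)) ≠ ⊤
    rwa [splitMap_splitWitness]
  · intro z K L hKL
    show f (splitMap k z) + f (splitMap k (z + mmDir _ K + mmDir _ L)) ≤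
      f (splitMap k (z + mmDir _ K)) + f (splitMap k (z + mmDir _ L))
    rw [splitMap_add, splitMap_add, splitMap_add, splitMap_mmDir, splitMap_mmDir]
    by_cases hK : (K : ℕ) = (k : ℕ) + 1
    · by_cases hL : (L : ℕ) = (k : ℕ) + 1
      · exact absurd (Fin.ext (hK.trans hL.symm)) hKL
      · simp [hK, hL, add_comm]
    · by_cases hL : (L : ℕ) = (k : ℕ) + 1
      · simp [hK, hL, add_comm]
      · simp only [if_neg hK, if_neg hL]
        exact hmm (splitMap k z) (psiMap k K) (psiMap k L) (psiMap_inj k hKL hK hL)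
end
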